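/- For every ε > 0 and every natural number ℓ ≥ 1, the ℓ-fold lattice convolution sum Σ_{n₁,…,n_ℓ ∈ ℤ²} ⟨n₁⟩^{-2} ⋯ ⟨n_ℓ⟩^{-2} ⟨n₁+⋯+n_ℓ⟩^{-2ε} is finite, where ⟨n⟩ = (1+|n|²)^{1/2}. -/
import Mathlib

open Real

noncomputable section LatticeAux

/-- `Jf n = ⟨n⟩² = 1 + |n|²`. -/
def Jf (n : ℤ × ℤ) : ℝ := 1 + ((n.1 : ℝ) ^ 2 + (n.2 : ℝ) ^ 2)

lemma one_le_Jf (n : ℤ × ℤ) : 1 ≤ Jf n := by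
  have : (0:ℝ) ≤ (n.1 : ℝ) ^ 2 + (n.2 : ℝ) ^ 2 := by positivity
  simp only [Jf]; linarith

lemma Jf_pos (n : ℤ × ℤ) : 0 < Jf n := lt_of_lt_of_le one_pos (one_le_Jf n)

lemma Jf_neg (n : ℤ × ℤ) : Jf (-n) = Jf n := by simp [Jf]

lemma Jf_add_le (a b : ℤ × ℤ) : Jf (a + b) ≤ 2 * Jf a * Jf b := by
  simp only [Jf, Prod.fst_add, Prod.snd_add, Int.cast_add]
  nlinarith [sq_nonneg ((a.1:ℝ) - b.1), sq_nonneg ((a.2:ℝ) - b.2), sq_nonneg ((a.1:ℝ)*b.1),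
    sq_nonneg ((a.2:ℝ)*b.2), sq_nonneg ((a.1:ℝ)*b.2), sq_nonneg ((a.2:ℝ)*b.1),
    sq_nonneg (a.1:ℝ), sq_nonneg (a.2:ℝ), sq_nonneg (b.1:ℝ), sq_nonneg (b.2:ℝ)]

lemma rpow_anti {x y : ℝ} (hx : 0 < x) (hxy : x ≤ y) {e : ℝ} (he : 0 ≤ e) :
    y ^ (-e) ≤ x ^ (-e) := by
  rw [Real.rpow_neg hx.le, Real.rpow_neg (hx.trans_le hxy).le]
  exact inv_anti₀ (Real.rpow_pos_of_pos hx e) (Real.rpow_le_rpow hx.le hxy he)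

lemma rpow_sq_inv {x : ℝ} (hx : 0 < x) (e : ℝ) : (x ^ (2:ℕ)) ^ (-e) = x ^ (-(2*e)) := by
  rw [← Real.rpow_natCast x 2, ← Real.rpow_mul hx.le]; ring_nf

lemma summable_one_dim {t : ℝ} (ht : 1/2 < t) :
    Summable fun k : ℤ => (1 + (k:ℝ) ^ 2) ^ (-t) := by
  have hb : (1:ℝ) < 2 * t := by linarith
  have h1 : Summable fun k : ℤ => |(k:ℝ)| ^ (-(2*t)) := summable_abs_int_rpow hb
  have h2 : Summable fun k : ℤ => (if k = 0 then (1:ℝ) else 0) :=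
    summable_of_ne_finset_zero (s := {0}) (by intro k hk; simp at hk; simp [hk])
  refine Summable.of_nonneg_of_le (fun k => by positivity) (fun k => ?_) (h1.add h2)
  rcases eq_or_ne k 0 with rfl | hk
  · simp
    positivity
  · have hk1 : (1:ℤ) ≤ |k| := Int.one_le_abs (by simpa using hk)
    have hk' : (1:ℝ) ≤ |(k:ℝ)| := by
      rw [← Int.cast_abs]; exact_mod_cast hk1
    have habs : |(k:ℝ)| ^ (2:ℕ) ≤ 1 + (k:ℝ)^2 := by
      rw [sq_abs]; nlinarith [sq_nonneg (k:ℝ)]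
    have hle : (1 + (k:ℝ)^2) ^ (-t) ≤ (|(k:ℝ)| ^ (2:ℕ)) ^ (-t) :=
      rpow_anti (by positivity) habs (by linarith)
    have heq : (|(k:ℝ)| ^ (2:ℕ)) ^ (-t) = |(k:ℝ)| ^ (-(2*t)) :=
      rpow_sq_inv (by positivity) t
    rw [heq] at hle
    simp [hk]
    linarith [hle]

lemma summable_Jf {s : ℝ} (hs : 1 < s) :
    Summable fun n : ℤ × ℤ => Jf n ^ (-s) := by
  have ht : 1/2 < s/2 := by linarith
  have h1 := summable_one_dim ht
  have hprod : Summable fun n : ℤ × ℤ =>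
      (1 + (n.1:ℝ)^2) ^ (-(s/2)) * (1 + (n.2:ℝ)^2) ^ (-(s/2)) :=
    h1.mul_of_nonneg h1 (fun k => by positivity) (fun k => by positivity)
  refine Summable.of_nonneg_of_le (fun n => Real.rpow_nonneg (Jf_pos n).le _)
    (fun n => ?_) hprod
  set a : ℝ := 1 + (n.1:ℝ)^2 with ha
  set b : ℝ := 1 + (n.2:ℝ)^2 with hb
  have hap : (0:ℝ) < a := by positivity
  have hbp : (0:ℝ) < b := by positivity
  have key : a * b ≤ (Jf n) ^ (2:ℕ) := by
    simp only [Jf, ha, hb]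
    nlinarith [sq_nonneg (n.1:ℝ), sq_nonneg (n.2:ℝ), sq_nonneg ((n.1:ℝ)^2 - (n.2:ℝ)^2),
      sq_nonneg ((n.1:ℝ)*(n.2:ℝ))]
  have step : ((Jf n) ^ (2:ℕ)) ^ (-(s/2)) ≤ (a*b) ^ (-(s/2)) :=
    rpow_anti (by positivity) key (by linarith)
  have e1 : ((Jf n) ^ (2:ℕ)) ^ (-(s/2)) = Jf n ^ (-s) := by
    rw [rpow_sq_inv (Jf_pos n)]
    ring_nf
  have e2 : (a*b) ^ (-(s/2)) = a ^ (-(s/2)) * b ^ (-(s/2)) :=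
    Real.mul_rpow hap.le hbp.le
  rw [e1, e2] at step
  exact step

lemma summable_Jf_shift {s : ℝ} (hs : 1 < s) (m : ℤ × ℤ) :
    Summable fun n : ℤ × ℤ => Jf (m + n) ^ (-s) :=
  ((Equiv.addLeft m).summable_iff (f := fun n : ℤ × ℤ => Jf n ^ (-s))).2 (summable_Jf hs)

/-- `Sv s = Σ_{n ∈ ℤ²} ⟨n⟩^{-2s}`. -/
def Sv (s : ℝ) : ℝ := ∑' n : ℤ × ℤ, Jf n ^ (-s)

lemma Sv_nonneg (s : ℝ) : 0 ≤ Sv s :=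
  tsum_nonneg fun n => Real.rpow_nonneg (Jf_pos n).le _

lemma tsum_Jf_shift {s : ℝ} (m : ℤ × ℤ) :
    ∑' n : ℤ × ℤ, Jf (m + n) ^ (-s) = Sv s :=
  (Equiv.addLeft m).tsum_eq (fun n : ℤ × ℤ => Jf n ^ (-s))

def Kc (c : ℝ) : ℝ := (2:ℝ) ^ (c/4) * (2 * Sv (1 + c/2))

lemma Kc_nonneg (c : ℝ) : 0 ≤ Kc c :=
  mul_nonneg (Real.rpow_nonneg (by norm_num) _) (by linarith [Sv_nonneg (1 + c/2)])

lemma key_pointwise {c : ℝ} (hc : 0 < c) (hc' : c ≤ 1/2) (m n : ℤ × ℤ) :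
    (Jf n)⁻¹ * Jf (m + n) ^ (-c) ≤
      (Jf m / 2) ^ (-(c/4)) * (Jf n ^ (-(1+c/2)) + Jf (m+n) ^ (-(1+c/2))) := by
  set A := Jf n with hA
  set B := Jf (m+n) with hB
  set M := Jf m with hM
  have hApos : 0 < A := Jf_pos n
  have hBpos : 0 < B := Jf_pos (m+n)
  have hMpos : 0 < M := Jf_pos m
  have hM2 : 0 < M / 2 := by linarith
  have hMle : M ≤ 2 * B * A := by
    have h := Jf_add_le (m+n) (-n)
    simpa [Jf_neg] using h
  have hAinv : A⁻¹ = A ^ (-(1:ℝ)) := by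
    rw [Real.rpow_neg hApos.le, Real.rpow_one]
  have hMnn : (0:ℝ) ≤ (M/2) ^ (-(c/4)) := Real.rpow_nonneg hM2.le _
  rcases le_total A B with hAB | hBA
  · -- A ≤ B, so B² ≥ M/2
    have hsq : M / 2 ≤ B ^ (2:ℕ) := by nlinarith
    have h1 : B ^ (-(c/2)) ≤ (M/2) ^ (-(c/4)) := by
      have h := rpow_anti hM2 hsq (e := c/4) (by linarith)
      rw [rpow_sq_inv hBpos] at h
      rw [show 2*(c/4) = c/2 by ring] at h
      exact h
    have h2 : B ^ (-(c/2)) ≤ A ^ (-(c/2)) := rpow_anti hApos hAB (by linarith)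
    have hBc : B ^ (-c) = B ^ (-(c/2)) * B ^ (-(c/2)) := by
      rw [← Real.rpow_add hBpos]; ring_nf
    have hcomb : A⁻¹ * A ^ (-(c/2)) = A ^ (-(1+c/2)) := by
      rw [hAinv, ← Real.rpow_add hApos]; ring_nf
    have t1 : A⁻¹ * B ^ (-(c/2)) ≤ A⁻¹ * A ^ (-(c/2)) :=
      mul_le_mul_of_nonneg_left h2 (inv_nonneg.2 hApos.le)
    have t2 : (A⁻¹ * B ^ (-(c/2))) * B ^ (-(c/2)) ≤ (A⁻¹ * A ^ (-(c/2))) * ((M/2) ^ (-(c/4))) :=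
      mul_le_mul t1 h1 (Real.rpow_nonneg hBpos.le _)
        (mul_nonneg (inv_nonneg.2 hApos.le) (Real.rpow_nonneg hApos.le _))
    calc A⁻¹ * B ^ (-c) = (A⁻¹ * B ^ (-(c/2))) * B ^ (-(c/2)) := by rw [hBc]; ring
      _ ≤ (A⁻¹ * A ^ (-(c/2))) * ((M/2) ^ (-(c/4))) := t2
      _ = (M/2) ^ (-(c/4)) * A ^ (-(1+c/2)) := by rw [hcomb]; ring
      _ ≤ (M/2) ^ (-(c/4)) * (A ^ (-(1+c/2)) + B ^ (-(1+c/2))) := by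
          have hBnn : (0:ℝ) ≤ B ^ (-(1+c/2)) := Real.rpow_nonneg hBpos.le _
          nlinarith
  · -- B ≤ A, so A² ≥ M/2
    have hsq : M / 2 ≤ A ^ (2:ℕ) := by nlinarith
    have h1 : A ^ (-(c/2)) ≤ (M/2) ^ (-(c/4)) := by
      have h := rpow_anti hM2 hsq (e := c/4) (by linarith)
      rw [rpow_sq_inv hApos] at h
      rw [show 2*(c/4) = c/2 by ring] at h
      exact h
    have h2 : A ^ (-(1-c/2)) ≤ B ^ (-(1-c/2)) := rpow_anti hBpos hBA (by linarith)
    have hsplit : A⁻¹ = A ^ (-(c/2)) * A ^ (-(1-c/2)) := by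
      rw [hAinv, ← Real.rpow_add hApos]; ring_nf
    have hmerge : B ^ (-(1-c/2)) * B ^ (-c) = B ^ (-(1+c/2)) := by
      rw [← Real.rpow_add hBpos]; ring_nf
    have t1 : A ^ (-(c/2)) * A ^ (-(1-c/2)) ≤ (M/2) ^ (-(c/4)) * B ^ (-(1-c/2)) :=
      mul_le_mul h1 h2 (Real.rpow_nonneg hApos.le _) hMnn
    have t2 : (A ^ (-(c/2)) * A ^ (-(1-c/2))) * B ^ (-c) ≤
        ((M/2) ^ (-(c/4)) * B ^ (-(1-c/2))) * B ^ (-c) :=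
      mul_le_mul_of_nonneg_right t1 (Real.rpow_nonneg hBpos.le _)
    calc A⁻¹ * B ^ (-c) = (A ^ (-(c/2)) * A ^ (-(1-c/2))) * B ^ (-c) := by rw [← hsplit]
      _ ≤ ((M/2) ^ (-(c/4)) * B ^ (-(1-c/2))) * B ^ (-c) := t2
      _ = (M/2) ^ (-(c/4)) * B ^ (-(1+c/2)) := by rw [mul_assoc, hmerge]
      _ ≤ (M/2) ^ (-(c/4)) * (A ^ (-(1+c/2)) + B ^ (-(1+c/2))) := by
          have hAnn : (0:ℝ) ≤ A ^ (-(1+c/2)) := Real.rpow_nonneg hApos.le _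
          nlinarith

lemma keyA {c : ℝ} (hc : 0 < c) (hc' : c ≤ 1/2) (m : ℤ × ℤ) :
    Summable (fun n : ℤ × ℤ => (Jf n)⁻¹ * Jf (m + n) ^ (-c)) ∧
    ∑' n : ℤ × ℤ, (Jf n)⁻¹ * Jf (m + n) ^ (-c) ≤ Kc c * Jf m ^ (-(c/4)) := by
  have hs : (1:ℝ) < 1 + c/2 := by linarith
  have hsum1 := summable_Jf hs
  have hsum2 := summable_Jf_shift hs m
  have hMpos := Jf_pos m
  have hg : Summable (fun n : ℤ × ℤ =>
      (Jf m / 2) ^ (-(c/4)) * (Jf n ^ (-(1+c/2)) + Jf (m+n) ^ (-(1+c/2)))) :=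
    (hsum1.add hsum2).mul_left _
  have hnonneg : ∀ n : ℤ × ℤ, 0 ≤ (Jf n)⁻¹ * Jf (m+n) ^ (-c) := fun n =>
    mul_nonneg (inv_nonneg.2 (Jf_pos n).le) (Real.rpow_nonneg (Jf_pos _).le _)
  have hle := key_pointwise hc hc' m
  have hsummable : Summable (fun n : ℤ × ℤ => (Jf n)⁻¹ * Jf (m + n) ^ (-c)) :=
    Summable.of_nonneg_of_le hnonneg hle hg
  refine ⟨hsummable, ?_⟩
  have hdiv : (Jf m / 2) ^ (-(c/4)) = (2:ℝ) ^ (c/4) * Jf m ^ (-(c/4)) := by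
    rw [div_eq_mul_inv, Real.mul_rpow hMpos.le (by norm_num),
      ← Real.rpow_neg_one (2:ℝ), ← Real.rpow_mul (by norm_num)]
    ring_nf
  calc ∑' n : ℤ × ℤ, (Jf n)⁻¹ * Jf (m + n) ^ (-c)
      ≤ ∑' n : ℤ × ℤ, (Jf m / 2) ^ (-(c/4)) * (Jf n ^ (-(1+c/2)) + Jf (m+n) ^ (-(1+c/2))) :=
        Summable.tsum_le_tsum hle hsummable hg
    _ = (Jf m / 2) ^ (-(c/4)) * (Sv (1+c/2) + Sv (1+c/2)) := by
        rw [tsum_mul_left, Summable.tsum_add hsum1 hsum2, tsum_Jf_shift m]; simp only [Sv]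
    _ = Kc c * Jf m ^ (-(c/4)) := by rw [hdiv, Kc]; ring

lemma main_induction (k : ℕ) {c : ℝ} (hc : 0 < c) (hc' : c ≤ 1/2) :
    ∃ C d : ℝ, 0 ≤ C ∧ 0 < d ∧ d ≤ 1/2 ∧ ∀ m : ℤ × ℤ,
      Summable (fun n : Fin (k+1) → ℤ × ℤ =>
        (∏ i, (Jf (n i))⁻¹) * Jf (m + ∑ i, n i) ^ (-c)) ∧
      ∑' n : Fin (k+1) → ℤ × ℤ, (∏ i, (Jf (n i))⁻¹) * Jf (m + ∑ i, n i) ^ (-c)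
        ≤ C * Jf m ^ (-d) := by
  induction k with
  | zero =>
    refine ⟨Kc c, c/4, Kc_nonneg c, by linarith, by linarith, fun m => ?_⟩
    have h := keyA hc hc' m
    have hfe : ((fun n : Fin 1 → ℤ × ℤ =>
        (∏ i, (Jf (n i))⁻¹) * Jf (m + ∑ i, n i) ^ (-c)) ∘
          (Equiv.funUnique (Fin 1) (ℤ × ℤ)).symm)
        = fun x : ℤ × ℤ => (Jf x)⁻¹ * Jf (m + x) ^ (-c) := by
      funext x
      simp [Fin.prod_univ_one, Fin.sum_univ_one]
    constructor
    · exact ((Equiv.funUnique (Fin 1) (ℤ × ℤ)).symm.summable_iff).1 (hfe ▸ h.1)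
    · calc ∑' n : Fin 1 → ℤ × ℤ, (∏ i, (Jf (n i))⁻¹) * Jf (m + ∑ i, n i) ^ (-c)
          = ∑' x : ℤ × ℤ, (Jf x)⁻¹ * Jf (m + x) ^ (-c) := by
            rw [← (Equiv.funUnique (Fin 1) (ℤ × ℤ)).symm.tsum_eq]
            exact tsum_congr fun x => congrFun hfe x
        _ ≤ Kc c * Jf m ^ (-(c/4)) := h.2
  | succ k ih =>
    obtain ⟨C, d, hC, hd, hd', H⟩ := ih
    refine ⟨C * Kc d, d/4, mul_nonneg hC (Kc_nonneg d), by linarith, by linarith, fun m => ?_⟩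
    set G : (ℤ × ℤ) × (Fin (k+1) → ℤ × ℤ) → ℝ := fun p =>
      (Jf p.1)⁻¹ * ((∏ i, (Jf (p.2 i))⁻¹) * Jf ((m + p.1) + ∑ i, p.2 i) ^ (-c)) with hGdef
    have hGnonneg : ∀ p, 0 ≤ G p := by
      intro p
      simp only [hGdef]
      refine mul_nonneg (inv_nonneg.2 (Jf_pos _).le)
        (mul_nonneg ?_ (Real.rpow_nonneg (Jf_pos _).le _))
      exact Finset.prod_nonneg fun i _ => inv_nonneg.2 (Jf_pos _).le
    have hslice : ∀ a, Summable fun b => G (a, b) := by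
      intro a
      simp only [hGdef]
      exact (H (m+a)).1.mul_left _
    have hsliceSum : ∀ a, ∑' b, G (a, b) ≤ C * ((Jf a)⁻¹ * Jf (m+a) ^ (-d)) := by
      intro a
      have h0 : ∑' b, G (a, b) = (Jf a)⁻¹ * ∑' n : Fin (k+1) → ℤ × ℤ,
          (∏ i, (Jf (n i))⁻¹) * Jf ((m + a) + ∑ i, n i) ^ (-c) := by
        simp only [hGdef]
        exact tsum_mul_left
      rw [h0]
      calc (Jf a)⁻¹ * ∑' n : Fin (k+1) → ℤ × ℤ,
            (∏ i, (Jf (n i))⁻¹) * Jf ((m + a) + ∑ i, n i) ^ (-c)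
          ≤ (Jf a)⁻¹ * (C * Jf (m+a) ^ (-d)) :=
            mul_le_mul_of_nonneg_left (H (m+a)).2 (inv_nonneg.2 (Jf_pos a).le)
        _ = C * ((Jf a)⁻¹ * Jf (m+a) ^ (-d)) := by ring
    have hbound : Summable fun a : ℤ × ℤ => C * ((Jf a)⁻¹ * Jf (m+a) ^ (-d)) :=
      ((keyA hd hd' m).1.mul_left C)
    have hrow : Summable fun a : ℤ × ℤ => ∑' b, G (a, b) :=
      Summable.of_nonneg_of_le (fun a => tsum_nonneg fun b => hGnonneg _) hsliceSum hbound
    have hG : Summable G := (summable_prod_of_nonneg hGnonneg).2 ⟨hslice, hrow⟩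
    have hfe : ((fun n : Fin (k+2) → ℤ × ℤ =>
        (∏ i, (Jf (n i))⁻¹) * Jf (m + ∑ i, n i) ^ (-c)) ∘
          (Fin.consEquiv (fun _ : Fin (k+2) => ℤ × ℤ))) = G := by
      funext p
      obtain ⟨a, g⟩ := p
      have hprod : (∏ i : Fin (k+2), (Jf ((Fin.cons a g : Fin (k+2) → ℤ × ℤ) i))⁻¹)
          = (Jf a)⁻¹ * ∏ i : Fin (k+1), (Jf (g i))⁻¹ := by
        rw [Fin.prod_univ_succ]
        simp
      have hsum : (∑ i : Fin (k+2), (Fin.cons a g : Fin (k+2) → ℤ × ℤ) i) = a + ∑ i : Fin (k+1), g i := by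
        rw [Fin.sum_univ_succ]
        simp
      show (∏ i : Fin (k+2), (Jf ((Fin.cons a g : Fin (k+2) → ℤ × ℤ) i))⁻¹) *
          Jf (m + ∑ i : Fin (k+2), (Fin.cons a g : Fin (k+2) → ℤ × ℤ) i) ^ (-c) = G (a, g)
      simp only [hGdef]
      rw [hprod, hsum, ← add_assoc, mul_assoc]
    constructor
    · exact ((Fin.consEquiv (fun _ : Fin (k+2) => ℤ × ℤ)).summable_iff).1 (hfe ▸ hG)
    · calc ∑' n : Fin (k+2) → ℤ × ℤ, (∏ i, (Jf (n i))⁻¹) * Jf (m + ∑ i, n i) ^ (-c)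
          = ∑' p, G p := by
            rw [← (Fin.consEquiv (fun _ : Fin (k+2) => ℤ × ℤ)).tsum_eq]
            exact tsum_congr fun p => congrFun hfe p
        _ = ∑' a, ∑' b, G (a, b) := Summable.tsum_prod' hG hslice
        _ ≤ ∑' a : ℤ × ℤ, C * ((Jf a)⁻¹ * Jf (m+a) ^ (-d)) := Summable.tsum_le_tsum hsliceSum hrow hbound
        _ = C * ∑' a : ℤ × ℤ, (Jf a)⁻¹ * Jf (m+a) ^ (-d) := tsum_mul_left
        _ ≤ C * (Kc d * Jf m ^ (-(d/4))) := mul_le_mul_of_nonneg_left (keyA hd hd' m).2 hC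
        _ = (C * Kc d) * Jf m ^ (-(d/4)) := by ring
end LatticeAux
theorem lattice_convolution_summable (ε : ℝ) (hε : 0 < ε) (ℓ : ℕ) (hℓ : 1 ≤ ℓ) :
    Summable (fun n : Fin ℓ → ℤ × ℤ =>
      (∏ i : Fin ℓ, (1 + (((n i).1 : ℝ) ^ 2 + ((n i).2 : ℝ) ^ 2))⁻¹) *
        (Real.sqrt (1 + (((∑ i : Fin ℓ, (n i).1 : ℤ) : ℝ) ^ 2 +
            ((∑ i : Fin ℓ, (n i).2 : ℤ) : ℝ) ^ 2))) ^ (-2 * ε)) := by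
  obtain ⟨k, rfl⟩ : ∃ k, ℓ = k + 1 := ⟨ℓ - 1, (Nat.succ_pred_eq_of_pos hℓ).symm⟩
  set c : ℝ := min ε (1/2) with hcdef
  have hc : 0 < c := lt_min hε (by norm_num)
  have hc' : c ≤ 1/2 := min_le_right _ _
  have hcε : c ≤ ε := min_le_left _ _
  obtain ⟨C, d, hC, hd, hd', H⟩ := main_induction k hc hc'
  have hsum := (H 0).1
  simp only [zero_add] at hsum
  refine Summable.of_nonneg_of_le (fun n => ?_) (fun n => ?_) hsum
  · refine mul_nonneg (Finset.prod_nonneg fun i _ => ?_) (Real.rpow_nonneg (Real.sqrt_nonneg _) _)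
    positivity
  · have hprodeq : (∏ i : Fin (k+1), (1 + (((n i).1 : ℝ) ^ 2 + ((n i).2 : ℝ) ^ 2))⁻¹)
        = ∏ i : Fin (k+1), (Jf (n i))⁻¹ := rfl
    set s : ℤ × ℤ := ∑ i : Fin (k+1), n i with hs
    have hs1 : ((∑ i : Fin (k+1), (n i).1 : ℤ) : ℝ) = (s.1 : ℝ) := by
      rw [hs, Prod.fst_sum]
    have hs2 : ((∑ i : Fin (k+1), (n i).2 : ℤ) : ℝ) = (s.2 : ℝ) := by
      rw [hs, Prod.snd_sum]
    have hJs : (1 + (((∑ i : Fin (k+1), (n i).1 : ℤ) : ℝ) ^ 2 +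
        ((∑ i : Fin (k+1), (n i).2 : ℤ) : ℝ) ^ 2)) = Jf s := by
      rw [hs1, hs2]; rfl
    have hsqrt : (Real.sqrt (Jf s)) ^ (-2 * ε) = Jf s ^ (-ε) := by
      rw [Real.sqrt_eq_rpow, ← Real.rpow_mul (Jf_pos s).le]
      ring_nf
    have hmono : Jf s ^ (-ε) ≤ Jf s ^ (-c) :=
      Real.rpow_le_rpow_of_exponent_le (one_le_Jf s) (by linarith)
    rw [hprodeq, hJs, hsqrt]
    have hprodnn : (0:ℝ) ≤ ∏ i : Fin (k+1), (Jf (n i))⁻¹ :=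
      Finset.prod_nonneg fun i _ => inv_nonneg.2 (Jf_pos _).le
    exact mul_le_mul_of_nonneg_left hmono hprodnn
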